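/- arXiv:2406.16226 — 2 statements merged into one kernel-verified Lean document; each statement's English description precedes it below -/
import Mathlib

section
/- Let Ω ⊂ ℝᴺ be a bounded open set, ε > 0, Ξ_ε = {ξ ∈ ℤᴺ : ε(ξ + Y) ⊂ Ω}, Ω̂_ε = int(⋃_{ξ ∈ Ξ_ε} ε(ξ + cl Y)) and Λ_ε = Ω \ Ω̂_ε. Then the Lebesgue measure of Λ_ε tends to 0 as ε → 0. -/
/-!
Every point `x` whose closed `2ε`-ball (in the sup metric) lies in `Ω` belongs to `Ω̂_ε`: each `y`
with `dist y x < ε` lies in the closed grid cell `ε(⌊y/ε⌋ + cl Y)`, which has diameter `ε`, so this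
cell lies in `Ω` and `y ∈ ⋃_{ξ ∈ Ξ_ε} ε(ξ + cl Y)`. Hence `Λ_ε ⊆ Ω ∩ cthickening (2ε) Ωᶜ`. As
`r → 0` these layers decrease to `Ω ∩ closure Ωᶜ = ∅`, and `Ω` has finite measure, so their
measures tend to `0`.
-/

open MeasureTheory Filter Set Topology

noncomputable section

def IsYoung (B : ℝ → ℝ) : Prop :=
  ContinuousOn B (Set.Ici 0) ∧ ConvexOn ℝ (Set.Ici 0) B ∧
  (∀ t : ℝ, 0 ≤ t → 0 ≤ B t) ∧ (∀ t : ℝ, 0 < t → 0 < B t) ∧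
  Tendsto (fun t => B t / t) (𝓝[>] (0:ℝ)) (𝓝 0) ∧
  Tendsto (fun t => B t / t) atTop atTop

def youngConj (B : ℝ → ℝ) (t : ℝ) : ℝ := sSup ((fun s => s * t - B s) '' Set.Ici 0)

def unitCell (N : ℕ) : Set (Fin N → ℝ) := Set.univ.pi fun _ => Set.Ioo (0:ℝ) 1

def cellOf {N : ℕ} (ε : ℝ) (ξ : Fin N → ℤ) : Set (Fin N → ℝ) :=
  {x | ∀ i, x i ∈ Set.Ioo (ε * (ξ i : ℝ)) (ε * ((ξ i : ℝ) + 1))}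

def bigXi {N : ℕ} (ε : ℝ) (Ω : Set (Fin N → ℝ)) : Set (Fin N → ℤ) := {ξ | cellOf ε ξ ⊆ Ω}

def hatOmega {N : ℕ} (ε : ℝ) (Ω : Set (Fin N → ℝ)) : Set (Fin N → ℝ) :=
  interior (⋃ ξ ∈ bigXi ε Ω, closure (cellOf ε ξ))

def lamEps {N : ℕ} (ε : ℝ) (Ω : Set (Fin N → ℝ)) : Set (Fin N → ℝ) := Ω \ hatOmega ε Ω

open Classical in
def unfold {N : ℕ} (ε : ℝ) (Ω : Set (Fin N → ℝ)) (φ : (Fin N → ℝ) → ℝ)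
    (x y : Fin N → ℝ) : ℝ :=
  if x ∈ hatOmega ε Ω then φ (fun i => ε * ((⌊x i / ε⌋ : ℝ) + y i)) else 0

/-- Luxemburg norm of `u` with respect to the Young function `B` and the measure `μ`. -/
def luxNorm {α : Type*} [MeasurableSpace α] (μ : MeasureTheory.Measure α) (B : ℝ → ℝ)
    (u : α → ℝ) : ℝ :=
  sInf {k : ℝ | 0 < k ∧ ∫⁻ x, ENNReal.ofReal (B (|u x| / k)) ∂μ ≤ 1}

open Metric

theorem tendsto_measure_inter_cthickening_compl {α : Type*} [PseudoMetricSpace α]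
    [MeasurableSpace α] [OpensMeasurableSpace α] {μ : Measure α} {U : Set α} (hU : IsOpen U)
    (hμU : μ U ≠ ⊤) : Tendsto (fun r => μ (U ∩ cthickening r Uᶜ)) (𝓝 0) (𝓝 0) := by
  have hrestrict : ∀ t, μ.restrict U t = μ (U ∩ t) := fun t => by
    rw [Measure.restrict_apply' hU.measurableSet, inter_comm]
  have hfinite : μ.restrict U (cthickening 1 Uᶜ) ≠ ⊤ :=
    ne_top_of_le_ne_top hμU ((hrestrict _).trans_le (measure_mono inter_subset_left))
  have h := tendsto_measure_cthickening (μ := μ.restrict U) ⟨1, one_pos, hfinite⟩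
  simpa only [hrestrict, hU.isClosed_compl.closure_eq, inter_compl_self, measure_empty] using h

section Grid

variable {N : ℕ} {ε : ℝ}

lemma closure_cellOf (hε : 0 < ε) (ξ : Fin N → ℤ) :
    closure (cellOf ε ξ) = univ.pi fun i => Icc (ε * ξ i) (ε * (ξ i + 1)) := by
  have hcell : cellOf ε ξ = univ.pi fun i => Ioo (ε * ξ i) (ε * (ξ i + 1)) := by
    ext x
    simp [cellOf, Set.mem_pi]
  rw [hcell, closure_pi_set]
  exact congrArg _ (funext fun i => closure_Ioo (mul_lt_mul_of_pos_left (lt_add_one _) hε).ne)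

lemma mem_Icc_mul_floor_div (hε : 0 < ε) (t : ℝ) :
    t ∈ Icc (ε * ⌊t / ε⌋) (ε * (⌊t / ε⌋ + 1)) :=
  ⟨(le_div_iff₀' hε).mp (Int.floor_le _), ((div_lt_iff₀' hε).mp (Int.lt_floor_add_one _)).le⟩

lemma mem_closure_cellOf_floor (hε : 0 < ε) (y : Fin N → ℝ) :
    y ∈ closure (cellOf ε fun i => ⌊y i / ε⌋) := by
  rw [closure_cellOf hε]
  exact fun i _ => mem_Icc_mul_floor_div hε (y i)

lemma closure_cellOf_floor_subset_closedBall (hε : 0 < ε) (y : Fin N → ℝ) :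
    closure (cellOf ε fun i => ⌊y i / ε⌋) ⊆ closedBall y ε := by
  intro z hz
  rw [mem_closedBall, dist_pi_le_iff hε.le]
  intro i
  rw [closure_cellOf hε] at hz
  have hlen := Real.dist_le_of_mem_Icc (hz i (mem_univ i)) (mem_Icc_mul_floor_div hε (y i))
  linarith

lemma mem_hatOmega_of_closedBall_subset (hε : 0 < ε) {Ω : Set (Fin N → ℝ)} {x : Fin N → ℝ}
    (hx : closedBall x (2 * ε) ⊆ Ω) : x ∈ hatOmega ε Ω := by
  refine mem_interior.mpr ⟨ball x ε, fun y hy => ?_, isOpen_ball, mem_ball_self hε⟩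
  have hcell : closure (cellOf ε fun i => ⌊y i / ε⌋) ⊆ Ω :=
    (closure_cellOf_floor_subset_closedBall hε y).trans <|
      (closedBall_subset_closedBall' (by linarith [mem_ball.mp hy])).trans hx
  exact mem_biUnion (subset_closure.trans hcell) (mem_closure_cellOf_floor hε y)

lemma lamEps_subset_inter_cthickening (hε : 0 < ε) (Ω : Set (Fin N → ℝ)) :
    lamEps ε Ω ⊆ Ω ∩ cthickening (2 * ε) Ωᶜ := by
  rintro x ⟨hxΩ, hxhat⟩
  refine ⟨hxΩ, by_contra fun hxthick => hxhat (mem_hatOmega_of_closedBall_subset hε ?_)⟩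
  intro y hy
  by_contra hyΩ
  exact hxthick (mem_cthickening_of_dist_le x y _ _ hyΩ (mem_closedBall'.mp hy))

end Grid

theorem measure_lamEps_tendsto_zero_general (N : ℕ) (Ω : Set (Fin N → ℝ))
    (hΩopen : IsOpen Ω) (hΩbdd : Bornology.IsBounded Ω) :
    Tendsto (fun ε : ℝ => MeasureTheory.volume (lamEps ε Ω)) (𝓝[>] (0:ℝ)) (𝓝 0) := by
  have htwice : Tendsto (fun ε : ℝ => 2 * ε) (𝓝[>] 0) (𝓝 0) := by
    simpa using ((continuous_const_mul (2 : ℝ)).tendsto 0).mono_left nhdsWithin_le_nhds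
  have hlayer : Tendsto (fun ε : ℝ => volume (Ω ∩ cthickening (2 * ε) Ωᶜ)) (𝓝[>] 0) (𝓝 0) :=
    (tendsto_measure_inter_cthickening_compl hΩopen hΩbdd.measure_lt_top.ne).comp htwice
  refine tendsto_of_tendsto_of_tendsto_of_le_of_le' tendsto_const_nhds hlayer
    (Eventually.of_forall fun _ => bot_le) ?_
  filter_upwards [self_mem_nhdsWithin] with ε hε
  exact measure_mono (lamEps_subset_inter_cthickening hε Ω)

/-- The Lebesgue measure of the boundary layer `Λ_ε = Ω \ Ω̂_ε` tends to `0` as `ε → 0⁺`. -/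
theorem measure_lamEps_tendsto_zero (N : ℕ) (Ω : Set (Fin N → ℝ))
    (hΩopen : IsOpen Ω) (hΩbdd : Bornology.IsBounded Ω)
    (hfr : MeasureTheory.volume (frontier Ω) = 0) :
    Tendsto (fun ε : ℝ => MeasureTheory.volume (lamEps ε Ω)) (𝓝[>] (0:ℝ)) (𝓝 0) :=
  measure_lamEps_tendsto_zero_general N Ω hΩopen hΩbdd
end
end

section
/- Let B be a Young function, Ω ⊂ ℝᴺ bounded open, ε > 0, and T_ε the unfolding operator. Then for every w ∈ L^B(Ω): (1/|Y|) ∫_{Ω×Y} B(|T_ε(w)(x,y)|) dx dy = ∫_{Ω̂_ε} B(|w(x)|) dx = ∫_Ω B(|w|) dx − ∫_{Λ_ε} B(|w|) dx; in particular (1/|Y|) ∫_{Ω×Y} B(|T_ε(w)|) dx dy ≤ ∫_Ω B(|w|) dx. -/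
open MeasureTheory Filter Set Topology

noncomputable section

/-!
On a cell `ε(ξ + Y) ⊆ Ω` the unfolded function is `w(ε(ξ + y))`, independent of `x`. Integrating
over the cell in `x` produces the factor `|ε(ξ + Y)| = ε^N`, which cancels the Jacobian `ε^{-N}`
of the affine change of variables `y ↦ ε(ξ + y)` from `Y` onto the cell; summing over the cells
gives the integral of `B(|w|)` over their union. That union differs from `Ω̂_ε` only by cell
frontiers, which are null since cells are convex, and off `Ω̂_ε` the unfolded function vanishes
while `B(0) = 0`. The remaining identities are additivity of the integral over
`Ω = (Ω ∩ Ω̂_ε) ∪ Λ_ε` and `B ≥ 0`.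
-/

section AffineChangeOfVariables

variable {E : Type*} [NormedAddCommGroup E] [NormedSpace ℝ E] [MeasurableSpace E] [BorelSpace E]
  [FiniteDimensional ℝ E] (μ : Measure E) [μ.IsAddHaarMeasure]

theorem map_add_smul_addHaar (a : E) {r : ℝ} (hr : r ≠ 0) :
    μ.map (fun y => a + r • y) = ENNReal.ofReal |(r ^ Module.finrank ℝ E)⁻¹| • μ := by
  change μ.map ((a + ·) ∘ (r • ·)) = _
  rw [← Measure.map_map (measurable_const_add a) (measurable_const_smul r),
    Measure.map_addHaar_smul μ hr, Measure.map_smul, map_add_left_eq_self]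

-- Both sides equal `c * μ t * ∫⁻ x in t, g x ∂μ` for the Jacobian factor `c` above, so in this
-- form the factor never has to be computed.
theorem measure_mul_setLIntegral_comp_add_smul (a : E) {r : ℝ} (hr : r ≠ 0) {t : Set E}
    (ht : MeasurableSet t) {g : E → ENNReal} (hg : Measurable g) :
    μ t * ∫⁻ y in (fun y => a + r • y) ⁻¹' t, g (a + r • y) ∂μ =
      μ ((fun y => a + r • y) ⁻¹' t) * ∫⁻ x in t, g x ∂μ := by
  have hΦ : Measurable fun y : E => a + r • y := by fun_prop
  rw [← setLIntegral_map ht hg hΦ, ← Measure.map_apply hΦ ht, map_add_smul_addHaar μ a hr,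
    Measure.restrict_smul, lintegral_smul_measure, Measure.smul_apply, smul_eq_mul, smul_eq_mul,
    mul_left_comm, mul_assoc]

end AffineChangeOfVariables

theorem IsYoung.map_zero {B : ℝ → ℝ} (hB : IsYoung B) : B 0 = 0 := by
  obtain ⟨hcont, -, -, -, hlim, -⟩ := hB
  have hB_nhds : Tendsto B (𝓝[>] 0) (𝓝 (B 0)) :=
    ((hcont 0 self_mem_Ici).tendsto).mono_left (nhdsWithin_mono _ Ioi_subset_Ici_self)
  have hB_zero : Tendsto B (𝓝[>] 0) (𝓝 0) := by
    have := hlim.mul (tendsto_nhdsWithin_of_tendsto_nhds tendsto_id)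
    rw [zero_mul] at this
    refine this.congr' ?_
    filter_upwards [self_mem_nhdsWithin] with t ht
    exact div_mul_cancel₀ _ (ne_of_gt ht)
  exact tendsto_nhds_unique hB_nhds hB_zero

theorem IsYoung.comp_abs_nonneg {B : ℝ → ℝ} (hB : IsYoung B) (t : ℝ) : 0 ≤ B |t| :=
  hB.2.2.1 _ (abs_nonneg t)

theorem IsYoung.continuous_comp_abs {B : ℝ → ℝ} (hB : IsYoung B) : Continuous fun t => B |t| :=
  hB.1.comp_continuous continuous_abs fun t => abs_nonneg t

theorem volume_unitCell (N : ℕ) : volume (unitCell N) = 1 := by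
  simp [unitCell, volume_pi_pi]

theorem measurableSet_unitCell (N : ℕ) : MeasurableSet (unitCell N) :=
  MeasurableSet.univ_pi fun _ => measurableSet_Ioo

section Cells

variable {N : ℕ} {ε : ℝ}

theorem cellOf_eq_pi (ε : ℝ) (ξ : Fin N → ℤ) :
    cellOf ε ξ = univ.pi fun i => Ioo (ε * ξ i) (ε * (ξ i + 1)) := by
  ext x; simp [cellOf]

theorem isOpen_cellOf (ε : ℝ) (ξ : Fin N → ℤ) : IsOpen (cellOf ε ξ) := by
  rw [cellOf_eq_pi]
  exact isOpen_set_pi finite_univ fun _ _ => isOpen_Ioo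

theorem measurableSet_cellOf (ε : ℝ) (ξ : Fin N → ℤ) : MeasurableSet (cellOf ε ξ) :=
  (isOpen_cellOf ε ξ).measurableSet

theorem convex_cellOf (ε : ℝ) (ξ : Fin N → ℤ) : Convex ℝ (cellOf ε ξ) := by
  rw [cellOf_eq_pi]
  exact convex_pi fun _ _ => convex_Ioo _ _

theorem floor_div_eq_of_mem_cellOf (hε : 0 < ε) {ξ : Fin N → ℤ} {x : Fin N → ℝ}
    (hx : x ∈ cellOf ε ξ) (i : Fin N) : ⌊x i / ε⌋ = ξ i := by
  obtain ⟨hlo, hhi⟩ := hx i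
  rw [Int.floor_eq_iff, le_div_iff₀ hε, div_lt_iff₀ hε]
  constructor <;> linarith

theorem pairwise_disjoint_cellOf (hε : 0 < ε) :
    Pairwise fun ξ η : Fin N → ℤ => Disjoint (cellOf ε ξ) (cellOf ε η) := by
  intro ξ η hne
  refine disjoint_left.mpr fun x hξ hη => hne (funext fun i => ?_)
  rw [← floor_div_eq_of_mem_cellOf hε hξ i, ← floor_div_eq_of_mem_cellOf hε hη i]

theorem preimage_cellOf (hε : 0 < ε) (ξ : Fin N → ℤ) :
    (fun (y : Fin N → ℝ) i => ε * (ξ i + y i)) ⁻¹' cellOf ε ξ = unitCell N := by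
  ext y
  simp only [cellOf, unitCell, mem_preimage, mem_ofPred_eq, Set.mem_pi, mem_univ, true_implies,
    mem_Ioo]
  refine forall_congr' fun i => ?_
  rw [mul_lt_mul_iff_right₀ hε, mul_lt_mul_iff_right₀ hε]
  constructor <;> rintro ⟨h₁, h₂⟩ <;> constructor <;> linarith

theorem setLIntegral_cellOf_prod_unitCell (hε : 0 < ε) (ξ : Fin N → ℤ)
    {g : (Fin N → ℝ) → ENNReal} (hg : Measurable g) :
    ∫⁻ p in cellOf ε ξ ×ˢ unitCell N, g (fun i => ε * (ξ i + p.2 i)) =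
      ∫⁻ x in cellOf ε ξ, g x := by
  have hΦ : ∀ y : Fin N → ℝ, (fun i => ε * ξ i) + ε • y = fun i => ε * (ξ i + y i) := by
    intro y; funext i; simp only [Pi.add_apply, Pi.smul_apply, smul_eq_mul]; ring
  have key := measure_mul_setLIntegral_comp_add_smul volume (fun i => ε * ξ i) hε.ne'
    (measurableSet_cellOf ε ξ) hg
  simp only [hΦ, preimage_cellOf hε, volume_unitCell, one_mul] at key
  rw [Measure.volume_eq_prod, setLIntegral_prod _ (by fun_prop)]
  dsimp only
  rw [setLIntegral_const, mul_comm]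
  exact key

end Cells

section Unfolding

variable {N : ℕ} {ε : ℝ} {Ω : Set (Fin N → ℝ)}

def openCellUnion (ε : ℝ) (Ω : Set (Fin N → ℝ)) : Set (Fin N → ℝ) :=
  ⋃ ξ ∈ bigXi ε Ω, cellOf ε ξ

theorem measurableSet_hatOmega (ε : ℝ) (Ω : Set (Fin N → ℝ)) : MeasurableSet (hatOmega ε Ω) :=
  isOpen_interior.measurableSet

theorem openCellUnion_eq_iUnion (ε : ℝ) (Ω : Set (Fin N → ℝ)) :
    openCellUnion ε Ω = ⋃ ξ : bigXi ε Ω, cellOf ε ξ :=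
  biUnion_eq_iUnion _ _

theorem openCellUnion_subset_inter_hatOmega (ε : ℝ) (Ω : Set (Fin N → ℝ)) :
    openCellUnion ε Ω ⊆ Ω ∩ hatOmega ε Ω :=
  subset_inter (iUnion₂_subset fun _ hξ => hξ)
    (interior_maximal (iUnion₂_mono fun _ _ => subset_closure)
      (isOpen_biUnion fun ξ _ => isOpen_cellOf ε ξ))

-- The closed cells cover `hatOmega` and each differs from the open one by its null frontier.
theorem volume_hatOmega_diff_openCellUnion (ε : ℝ) (Ω : Set (Fin N → ℝ)) :
    volume (hatOmega ε Ω \ openCellUnion ε Ω) = 0 := by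
  refine measure_mono_null (t := ⋃ ξ : Fin N → ℤ, frontier (cellOf ε ξ)) ?_
    (measure_iUnion_null fun ξ => (convex_cellOf ε ξ).addHaar_frontier volume)
  rintro x ⟨hxH, hxU⟩
  obtain ⟨ξ, hξ, hxξ⟩ := mem_iUnion₂.mp (interior_subset hxH)
  refine mem_iUnion.mpr ⟨ξ, ?_⟩
  rw [(isOpen_cellOf ε ξ).frontier_eq]
  exact ⟨hxξ, fun h => hxU (mem_iUnion₂.mpr ⟨ξ, hξ, h⟩)⟩

theorem ae_eq_openCellUnion_of_subset {s : Set (Fin N → ℝ)}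
    (hUs : openCellUnion ε Ω ⊆ s) (hsH : s ⊆ hatOmega ε Ω) :
    s =ᵐ[volume] openCellUnion ε Ω :=
  ae_eq_set.mpr ⟨measure_mono_null (sdiff_subset_sdiff_left hsH)
    (volume_hatOmega_diff_openCellUnion ε Ω), by simp [sdiff_eq_empty.mpr hUs]⟩

theorem hatOmega_ae_eq_openCellUnion (ε : ℝ) (Ω : Set (Fin N → ℝ)) :
    hatOmega ε Ω =ᵐ[volume] openCellUnion ε Ω :=
  ae_eq_openCellUnion_of_subset (fun _ hx => (openCellUnion_subset_inter_hatOmega ε Ω hx).2)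
    subset_rfl

theorem inter_hatOmega_ae_eq_openCellUnion (ε : ℝ) (Ω : Set (Fin N → ℝ)) :
    (Ω ∩ hatOmega ε Ω : Set (Fin N → ℝ)) =ᵐ[volume] openCellUnion ε Ω :=
  ae_eq_openCellUnion_of_subset (openCellUnion_subset_inter_hatOmega ε Ω) inter_subset_right

theorem inter_hatOmega_ae_eq_hatOmega (ε : ℝ) (Ω : Set (Fin N → ℝ)) :
    (Ω ∩ hatOmega ε Ω : Set (Fin N → ℝ)) =ᵐ[volume] hatOmega ε Ω :=
  (inter_hatOmega_ae_eq_openCellUnion ε Ω).trans (hatOmega_ae_eq_openCellUnion ε Ω).symm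

theorem unfold_of_mem_cellOf (hε : 0 < ε) {ξ : Fin N → ℤ} (hξ : ξ ∈ bigXi ε Ω)
    {x : Fin N → ℝ} (hx : x ∈ cellOf ε ξ) (φ : (Fin N → ℝ) → ℝ) (y : Fin N → ℝ) :
    unfold ε Ω φ x y = φ (fun i => ε * (ξ i + y i)) := by
  have hxU : x ∈ openCellUnion ε Ω := mem_iUnion₂.mpr ⟨ξ, hξ, hx⟩
  simp only [unfold, if_pos (openCellUnion_subset_inter_hatOmega ε Ω hxU).2,
    floor_div_eq_of_mem_cellOf hε hx]

theorem measurable_unfold {φ : (Fin N → ℝ) → ℝ} (hφ : Measurable φ) :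
    Measurable fun p : (Fin N → ℝ) × (Fin N → ℝ) => unfold ε Ω φ p.1 p.2 := by
  refine Measurable.ite (measurable_fst (measurableSet_hatOmega ε Ω)) ?_ measurable_const
  refine hφ.comp (measurable_pi_lambda _ fun i => ?_)
  have hfloor : Measurable fun p : (Fin N → ℝ) × (Fin N → ℝ) => (⌊p.1 i / ε⌋ : ℝ) :=
    measurable_from_top.comp (Int.measurable_floor.comp (by fun_prop))
  exact (hfloor.add (by fun_prop)).const_mul ε

theorem lintegral_unfold (hε : 0 < ε) {G : ℝ → ENNReal} (hG : Measurable G) (hG₀ : G 0 = 0)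
    {φ : (Fin N → ℝ) → ℝ} (hφ : Measurable φ) :
    ∫⁻ p in Ω ×ˢ unitCell N, G (unfold ε Ω φ p.1 p.2) = ∫⁻ x in hatOmega ε Ω, G (φ x) := by
  have hcells : Pairwise fun ξ η : bigXi ε Ω =>
      Disjoint (cellOf ε (ξ : Fin N → ℤ)) (cellOf ε (η : Fin N → ℤ)) :=
    (pairwise_disjoint_cellOf hε).comp_of_injective Subtype.val_injective
  calc ∫⁻ p in Ω ×ˢ unitCell N, G (unfold ε Ω φ p.1 p.2)
      = ∫⁻ p in Ω ×ˢ unitCell N,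
          (hatOmega ε Ω ×ˢ univ).indicator (fun p => G (unfold ε Ω φ p.1 p.2)) p := by
        congr 1; funext p
        by_cases hp : p.1 ∈ hatOmega ε Ω
        · simp [hp]
        · simp [hp, unfold, hG₀]
    _ = ∫⁻ p in openCellUnion ε Ω ×ˢ unitCell N, G (unfold ε Ω φ p.1 p.2) := by
        rw [setLIntegral_indicator ((measurableSet_hatOmega ε Ω).prod MeasurableSet.univ),
          prod_inter_prod, univ_inter, inter_comm]
        exact setLIntegral_congr
          (Measure.set_prod_ae_eq (inter_hatOmega_ae_eq_openCellUnion ε Ω) ae_eq_rfl)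
    _ = ∑' ξ : bigXi ε Ω,
          ∫⁻ p in cellOf ε (ξ : Fin N → ℤ) ×ˢ unitCell N, G (unfold ε Ω φ p.1 p.2) := by
        rw [openCellUnion_eq_iUnion, iUnion_prod_const]
        exact lintegral_iUnion
          (fun ξ : bigXi ε Ω => (measurableSet_cellOf ε ξ.1).prod (measurableSet_unitCell N))
          (fun ξ η hne => (hcells hne).set_prod_left _ _) _
    _ = ∑' ξ : bigXi ε Ω, ∫⁻ x in cellOf ε (ξ : Fin N → ℤ), G (φ x) := by
        refine tsum_congr fun ξ => ?_
        rw [← setLIntegral_cellOf_prod_unitCell hε ξ.1 (g := fun x => G (φ x)) (hG.comp hφ)]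
        refine setLIntegral_congr_fun
          ((measurableSet_cellOf ε ξ.1).prod (measurableSet_unitCell N)) fun p hp => ?_
        rw [unfold_of_mem_cellOf hε ξ.2 hp.1]
    _ = ∫⁻ x in hatOmega ε Ω, G (φ x) := by
        rw [← lintegral_iUnion (fun ξ : bigXi ε Ω => measurableSet_cellOf ε ξ.1) hcells,
          ← openCellUnion_eq_iUnion]
        exact setLIntegral_congr (hatOmega_ae_eq_openCellUnion ε Ω).symm

theorem integral_unfold (hε : 0 < ε) {G : ℝ → ℝ} (hG : Measurable G) (hG_nonneg : ∀ t, 0 ≤ G t)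
    (hG₀ : G 0 = 0) {φ : (Fin N → ℝ) → ℝ} (hφ : Measurable φ) :
    ∫ p in Ω ×ˢ unitCell N, G (unfold ε Ω φ p.1 p.2) = ∫ x in hatOmega ε Ω, G (φ x) := by
  rw [integral_eq_lintegral_of_nonneg_ae (ae_of_all _ fun _ => hG_nonneg _)
      (hG.comp (measurable_unfold hφ)).aestronglyMeasurable,
    integral_eq_lintegral_of_nonneg_ae (ae_of_all _ fun _ => hG_nonneg _)
      (hG.comp hφ).aestronglyMeasurable,
    lintegral_unfold hε (G := fun t => ENNReal.ofReal (G t)) (ENNReal.measurable_ofReal.comp hG)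
      (by simp [hG₀]) hφ]

end Unfolding

theorem unfold_integral_identity_general (N : ℕ) (B : ℝ → ℝ) (hB : IsYoung B)
    (Ω : Set (Fin N → ℝ)) (ε : ℝ) (hε : 0 < ε) (w : (Fin N → ℝ) → ℝ) (hw : Measurable w)
    (hwB : MeasureTheory.IntegrableOn (fun x => B |w x|) Ω) :
    (1 / (MeasureTheory.volume (unitCell N)).toReal) *
        (∫ p in Ω ×ˢ unitCell N, B |unfold ε Ω w p.1 p.2|) =
      ∫ x in hatOmega ε Ω, B |w x| ∧
    (∫ x in hatOmega ε Ω, B |w x|) =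
      (∫ x in Ω, B |w x|) - ∫ x in lamEps ε Ω, B |w x| ∧
    (1 / (MeasureTheory.volume (unitCell N)).toReal) *
        (∫ p in Ω ×ˢ unitCell N, B |unfold ε Ω w p.1 p.2|) ≤
      ∫ x in Ω, B |w x| := by
  have hunfold : ∫ p in Ω ×ˢ unitCell N, B |unfold ε Ω w p.1 p.2| =
      ∫ x in hatOmega ε Ω, B |w x| :=
    integral_unfold hε hB.continuous_comp_abs.measurable hB.comp_abs_nonneg
      (by simp [hB.map_zero]) hw
  have hsplit : ∫ x in hatOmega ε Ω, B |w x| =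
      (∫ x in Ω, B |w x|) - ∫ x in lamEps ε Ω, B |w x| := by
    rw [← integral_inter_add_sdiff (measurableSet_hatOmega ε Ω) hwB,
      setIntegral_congr_set (inter_hatOmega_ae_eq_hatOmega ε Ω), lamEps, add_sub_cancel_right]
  have hΛ : 0 ≤ ∫ x in lamEps ε Ω, B |w x| := integral_nonneg fun x => hB.comp_abs_nonneg (w x)
  rw [volume_unitCell, ENNReal.toReal_one, div_one, one_mul, hunfold]
  exact ⟨rfl, hsplit, by linarith⟩

/-- Unfolded integral identities: `(1/|Y|) ∫_{Ω×Y} B(|T_ε w|) = ∫_{Ω̂_ε} B(|w|)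
 = ∫_Ω B(|w|) − ∫_{Λ_ε} B(|w|) ≤ ∫_Ω B(|w|)`. -/
theorem unfold_integral_identity (N : ℕ) (B : ℝ → ℝ) (hB : IsYoung B)
    (Ω : Set (Fin N → ℝ)) (hΩopen : IsOpen Ω) (hΩbdd : Bornology.IsBounded Ω)
    (ε : ℝ) (hε : 0 < ε) (w : (Fin N → ℝ) → ℝ) (hw : Measurable w)
    (hwB : MeasureTheory.IntegrableOn (fun x => B |w x|) Ω) :
    (1 / (MeasureTheory.volume (unitCell N)).toReal) *
        (∫ p in Ω ×ˢ unitCell N, B |unfold ε Ω w p.1 p.2|) =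
      ∫ x in hatOmega ε Ω, B |w x| ∧
    (∫ x in hatOmega ε Ω, B |w x|) =
      (∫ x in Ω, B |w x|) - ∫ x in lamEps ε Ω, B |w x| ∧
    (1 / (MeasureTheory.volume (unitCell N)).toReal) *
        (∫ p in Ω ×ˢ unitCell N, B |unfold ε Ω w p.1 p.2|) ≤
      ∫ x in Ω, B |w x| :=
  unfold_integral_identity_general N B hB Ω ε hε w hw hwB
end
end
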